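/- For every ε > 0 and Lebesgue-almost every x ∈ (0,θ), the inequality a_n(x) < n·(log n)^{1+ε} holds for all sufficiently large n ∈ ℕ₊. -/

import Mathlib

noncomputable section
open MeasureTheory Filter Set

namespace Theta

/-- θ = 1/√m -/
def th (m : ℕ) : ℝ := 1 / Real.sqrt m

/-- The θ-expansion map T_θ on [0,θ]. -/
def T (m : ℕ) (x : ℝ) : ℝ := if x = 0 then 0 else 1 / x - th m * ⌊1 / (x * th m)⌋₊

/-- The n-th digit a_n(x) (n ≥ 1), a_n(x) = a_1(T_θ^{n-1} x) with a_1(x) = ⌊1/(xθ)⌋. -/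
def a (m n : ℕ) (x : ℝ) : ℕ := ⌊1 / ((T m)^[n - 1] x * th m)⌋₊

/-- Ω: the irrationals in (0,θ). -/
def Omega (m : ℕ) : Set ℝ := {x | x ∈ Set.Ioo 0 (th m) ∧ Irrational x}

/-- Convergent numerators, shifted: `p m x (n+1)` is p_n(x), `p m x 0` is p_{-1} = 1. -/
def p (m : ℕ) (x : ℝ) : ℕ → ℝ
  | 0 => 1
  | 1 => 0
  | n + 2 => (a m (n + 1) x) * th m * p m x (n + 1) + p m x n

/-- Convergent denominators, shifted: `q m x (n+1)` is q_n(x), `q m x 0` is q_{-1} = 0. -/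
def q (m : ℕ) (x : ℝ) : ℕ → ℝ
  | 0 => 0
  | 1 => 1
  | n + 2 => (a m (n + 1) x) * th m * q m x (n + 1) + q m x n

/-! The measure with density `1 / (1 + θ x)` on `(0, θ)` is `T`-invariant: `T` maps each interval
on which `⌊1 / (x θ)⌋ = k` (for `k ≥ m`) onto `[0, θ)` via `x ↦ 1 / x - k θ`, and the masses of the
preimages of `[0, w]` in these branches telescope to the mass of `[0, w]`. The density lies in
`[1/2, 1]`, so Lebesgue measure on `(0, θ)` is at most twice this measure. Since `a_n x ≥ c` forces
`T^{n-1} x ≤ 1 / (c θ)`, invariance gives `λ {a_n ≥ c} ≤ 2 / (c θ)`; for `c = n (log n)^{1+ε}`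
these bounds are summable (Cauchy condensation), and Borel–Cantelli concludes. -/

open Function
open scoped ENNReal Topology

section General

lemma summable_one_div_nat_mul_log_rpow {p : ℝ} (hp : 1 < p) :
    Summable fun n : ℕ => 1 / (n * Real.log n ^ p) := by
  have hlog2 : 0 < Real.log 2 := Real.log_pos one_lt_two
  refine (summable_condensed_iff_of_eventually_nonneg
    (Eventually.of_forall fun n => by positivity) ?_).1 ?_
  · filter_upwards [eventually_ge_atTop 2] with n hn
    have hn' : (2 : ℝ) ≤ n := by exact_mod_cast hn
    have hlog : 0 < Real.log n := Real.log_pos (by linarith)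
    apply one_div_le_one_div_of_le (by positivity)
    push_cast
    gcongr <;> linarith
  · have hp' : Summable fun k : ℕ => 1 / (k : ℝ) ^ p / Real.log 2 ^ p :=
      (Real.summable_one_div_nat_rpow.2 hp).div_const _
    refine hp'.congr fun k => ?_
    push_cast
    rw [Real.log_pow, Real.mul_rpow (Nat.cast_nonneg k) hlog2.le]
    field_simp

lemma tsum_ofReal_sub_succ {g : ℕ → ℝ} {l : ℝ} (hg : Antitone g) (hl : Tendsto g atTop (𝓝 l)) :
    ∑' j, ENNReal.ofReal (g j - g (j + 1)) = ENNReal.ofReal (g 0 - l) := by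
  have hnonneg : ∀ j, 0 ≤ g j - g (j + 1) := fun j => sub_nonneg.2 (hg (Nat.le_succ j))
  have hsum : HasSum (fun j => g j - g (j + 1)) (g 0 - l) := by
    rw [hasSum_iff_tendsto_nat_of_nonneg hnonneg]
    simpa only [Finset.sum_range_sub'] using tendsto_const_nhds.sub hl
  rw [← ENNReal.ofReal_tsum_of_nonneg hnonneg hsum.summable, hsum.tsum_eq]

lemma ae_eventually_notMem_of_summable {α : Type*} [MeasurableSpace α] {μ : Measure α}
    {s : ℕ → Set α} {b : ℕ → ℝ} (hb : Summable b)
    (hs : ∀ᶠ n in atTop, μ (s n) ≤ ENNReal.ofReal (b n)) :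
    ∀ᵐ x ∂μ, ∀ᶠ n in atTop, x ∉ s n := by
  obtain ⟨N, hN⟩ := eventually_atTop.1 hs
  have htail : ∑' n, μ (s (n + N)) ≠ ∞ :=
    ne_top_of_le_ne_top
      (ENNReal.tsum_coe_ne_top_iff_summable.2 ((summable_nat_add_iff N).2 hb).toNNReal)
      (ENNReal.tsum_le_tsum fun n => hN _ (Nat.le_add_left N n))
  filter_upwards [ae_eventually_notMem htail] with x hx
  rw [← map_add_atTop_eq_nat N]
  exact hx

lemma le_of_le_natFloor {t c : ℝ} (hc : 0 < c) (h : c ≤ ⌊t⌋₊) : c ≤ t := by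
  rcases le_or_gt 0 t with ht | ht
  · exact h.trans (Nat.floor_le ht)
  · rw [Nat.floor_of_nonpos ht.le, Nat.cast_zero] at h
    linarith

end General

section Expansion

variable {m : ℕ}

lemma th_nonneg : 0 ≤ th m := by unfold th; positivity

lemma th_pos (hm : 0 < m) : 0 < th m := by
  have : 0 < Real.sqrt m := Real.sqrt_pos.2 (by exact_mod_cast hm)
  unfold th; positivity

lemma natCast_mul_th_sq (hm : 0 < m) : (m : ℝ) * th m ^ 2 = 1 := by
  rw [th, div_pow, Real.sq_sqrt (Nat.cast_nonneg m)]
  field_simp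

lemma natCast_mul_th (hm : 0 < m) : (m : ℝ) * th m = 1 / th m := by
  rw [eq_div_iff (th_pos hm).ne', mul_assoc, ← sq, natCast_mul_th_sq hm]

lemma th_sq_le_one (hm : 0 < m) : th m ^ 2 ≤ 1 := by
  have h := natCast_mul_th_sq hm
  have : (1 : ℝ) ≤ m := by exact_mod_cast hm
  nlinarith [sq_nonneg (th m)]

lemma measurable_T : Measurable (T m) := by
  refine Measurable.ite measurableSet_eq measurable_const ?_
  exact (measurable_id.const_div 1).sub <| measurable_const.mul <|
    measurable_from_top.comp ((measurable_id.mul_const _).const_div 1).nat_floor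

lemma T_of_ne_zero {x : ℝ} (hx : x ≠ 0) : T m x = 1 / x - th m * ⌊1 / (x * th m)⌋₊ :=
  if_neg hx

lemma floor_eq_iff_mul_th (hm : 0 < m) {x : ℝ} (hx : 0 < x) {k : ℕ} :
    ⌊1 / (x * th m)⌋₊ = k ↔ k * th m ≤ 1 / x ∧ 1 / x < (k + 1) * th m := by
  have hθ := th_pos hm
  rw [Nat.floor_eq_iff (by positivity), ← div_div, le_div_iff₀ hθ, div_lt_iff₀ hθ]

lemma T_mem_Ico (hm : 0 < m) {x : ℝ} (hx : x ∈ Ioo 0 (th m)) : T m x ∈ Ico 0 (th m) := by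
  obtain ⟨h₁, h₂⟩ := (floor_eq_iff_mul_th hm hx.1 (k := ⌊1 / (x * th m)⌋₊)).1 rfl
  rw [T_of_ne_zero hx.1.ne']
  constructor <;> linarith

-- `j` indexes the branch of `T` on which the first digit is `m + j`.
lemma T_le_iff (hm : 0 < m) {x w : ℝ} (hx : x ∈ Ioo 0 (th m)) (hw : 0 ≤ w) (hwθ : w < th m) :
    T m x ≤ w ↔ ∃ j : ℕ, x ∈ Icc (1 / ((m + j) * th m + w)) (1 / ((m + j) * th m)) := by
  have hθ := th_pos hm
  have hmθ := natCast_mul_th hm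
  have hx' : 1 / th m < 1 / x := one_div_lt_one_div_of_lt hx.1 hx.2
  have hmem : ∀ j : ℕ, x ∈ Icc (1 / ((m + j) * th m + w)) (1 / ((m + j) * th m)) ↔
      (m + j) * th m ≤ 1 / x ∧ 1 / x ≤ (m + j) * th m + w := fun j => by
    have : 0 < (m + j) * th m := by positivity
    rw [mem_Icc, one_div_le (by positivity) hx.1, le_one_div hx.1 this, and_comm]
  simp only [hmem, T_of_ne_zero hx.1.ne']
  constructor
  · intro hT
    set k := ⌊1 / (x * th m)⌋₊
    obtain ⟨h₁, h₂⟩ := (floor_eq_iff_mul_th hm hx.1 (k := k)).1 rfl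
    have hmk : m ≤ k := by
      have : (m : ℝ) < k + 1 := lt_of_mul_lt_mul_right (by linarith) hθ.le
      exact_mod_cast Nat.lt_succ_iff.1 (by exact_mod_cast this)
    refine ⟨k - m, ?_⟩
    rw [Nat.cast_sub hmk, add_sub_cancel]
    constructor <;> linarith
  · rintro ⟨j, h₁, h₂⟩
    have hk : ⌊1 / (x * th m)⌋₊ = m + j :=
      (floor_eq_iff_mul_th hm hx.1).2 ⟨by push_cast; linarith, by push_cast; linarith⟩
    rw [hk]
    push_cast
    linarith

-- For `m = 1` this is `log 2` times the Gauss measure.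
def gaussMeasure (m : ℕ) : Measure ℝ :=
  (volume.restrict (Ioo 0 (th m))).withDensity fun x => ENNReal.ofReal (1 + th m * x)⁻¹

lemma gaussMeasure_le_restrict_volume : gaussMeasure m ≤ volume.restrict (Ioo 0 (th m)) := by
  conv_rhs => rw [← withDensity_one (μ := volume.restrict (Ioo 0 (th m)))]
  refine withDensity_mono ((ae_restrict_mem measurableSet_Ioo).mono fun x hx => ?_)
  have : 0 ≤ th m * x := mul_nonneg th_nonneg hx.1.le
  exact ENNReal.ofReal_le_one.2 (inv_le_one_of_one_le₀ (by linarith))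

instance : IsFiniteMeasure (gaussMeasure m) :=
  isFiniteMeasure_of_le _ gaussMeasure_le_restrict_volume

instance : NullSingletonClass (gaussMeasure m) := by
  unfold gaussMeasure; infer_instance

lemma restrict_volume_le_two_smul_gaussMeasure (hm : 0 < m) :
    volume.restrict (Ioo 0 (th m)) ≤ (2 : ℝ≥0∞) • gaussMeasure m := by
  rw [gaussMeasure, ← withDensity_smul' _ _ ENNReal.ofNat_ne_top]
  conv_lhs => rw [← withDensity_one (μ := volume.restrict (Ioo 0 (th m)))]
  refine withDensity_mono ((ae_restrict_mem measurableSet_Ioo).mono fun x hx => ?_)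
  have hθx : th m * x ≤ 1 := by nlinarith [th_sq_le_one hm, hx.1, hx.2, th_pos hm]
  have hpos : 0 < 1 + th m * x := by nlinarith [th_pos hm, hx.1]
  simp only [Pi.one_apply, Pi.smul_apply, smul_eq_mul]
  rw [← ENNReal.ofReal_ofNat 2, ← ENNReal.ofReal_mul zero_le_two, ENNReal.one_le_ofReal,
    ← div_eq_mul_inv, le_div_iff₀ hpos]
  linarith

lemma gaussMeasure_inter_Ioo (s : Set ℝ) :
    gaussMeasure m (s ∩ Ioo 0 (th m)) = gaussMeasure m s :=
  measure_inter_conull <| nonpos_iff_eq_zero.1 <|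
    (gaussMeasure_le_restrict_volume _).trans (ae_iff.1 (ae_restrict_mem measurableSet_Ioo)).le

lemma gaussMeasure_Icc (hm : 0 < m) {u v : ℝ} (hu : 0 ≤ u) (huv : u ≤ v) (hv : v ≤ th m) :
    gaussMeasure m (Icc u v) =
      ENNReal.ofReal (Real.log ((1 + th m * v) / (1 + th m * u)) / th m) := by
  have hθ := th_pos hm
  have hpos : ∀ x ∈ Icc u v, 0 < 1 + th m * x := fun x hx => by nlinarith [hx.1]
  have hcont : ContinuousOn (fun x => (1 + th m * x)⁻¹) (Icc u v) :=
    (by fun_prop : Continuous fun x => 1 + th m * x).continuousOn.inv₀ fun x hx => (hpos x hx).ne'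
  rw [← measure_congr (Ioo_ae_eq_Icc (μ := gaussMeasure m)), gaussMeasure,
    withDensity_apply _ measurableSet_Ioo, Measure.restrict_restrict measurableSet_Ioo,
    inter_eq_left.2 (Ioo_subset_Ioo hu hv),
    ← ofReal_integral_eq_lintegral_ofReal (hcont.integrableOn_Icc.mono_set Ioo_subset_Icc_self)
      ((ae_restrict_mem measurableSet_Ioo).mono fun x hx =>
        (inv_pos.2 (hpos x (Ioo_subset_Icc_self hx))).le),
    ← integral_Ioc_eq_integral_Ioo, ← intervalIntegral.integral_of_le huv]
  simp_rw [add_comm (1 : ℝ)]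
  rw [intervalIntegral.integral_comp_mul_add (fun x => x⁻¹) hθ.ne',
    integral_inv_of_pos (by nlinarith) (by nlinarith), smul_eq_mul, inv_mul_eq_div]

lemma gaussMeasure_Iic_le (u : ℝ) : gaussMeasure m (Iic u) ≤ ENNReal.ofReal u :=
  calc gaussMeasure m (Iic u) ≤ volume.restrict (Ioo 0 (th m)) (Iic u) :=
        gaussMeasure_le_restrict_volume _
    _ ≤ volume (Ioc 0 u) := by
        rw [Measure.restrict_apply measurableSet_Iic]
        exact measure_mono fun x hx => ⟨hx.2.1, hx.1⟩
    _ = ENNReal.ofReal u := by rw [Real.volume_Ioc, sub_zero]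

lemma gaussMeasure_Iic (hm : 0 < m) {w : ℝ} (hw : 0 ≤ w) (hwθ : w < th m) :
    gaussMeasure m (Iic w) = ENNReal.ofReal (Real.log (1 + th m * w) / th m) := by
  have hI : Iic w ∩ Ioo 0 (th m) = Ioc 0 w := by
    ext x
    simp only [mem_inter_iff, mem_Iic, mem_Ioo, mem_Ioc]
    constructor
    · rintro ⟨h₁, h₂, -⟩; exact ⟨h₂, h₁⟩
    · rintro ⟨h₁, h₂⟩; exact ⟨h₂, h₁, h₂.trans_lt hwθ⟩
  rw [← gaussMeasure_inter_Ioo, hI, measure_congr Ioc_ae_eq_Icc,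
    gaussMeasure_Icc hm le_rfl hw hwθ.le, mul_zero, add_zero, div_one]

lemma gaussMeasure_Icc_one_div (hm : 0 < m) {B w : ℝ} (hB : 1 / th m ≤ B) (hw : 0 ≤ w) :
    gaussMeasure m (Icc (1 / (B + w)) (1 / B)) =
      ENNReal.ofReal (Real.log (1 + w / B) / th m - Real.log (1 + w / (B + th m)) / th m) := by
  have hθ := th_pos hm
  have hB₀ : 0 < B := (one_div_pos.2 hθ).trans_le hB
  rw [gaussMeasure_Icc hm (by positivity) (one_div_le_one_div_of_le hB₀ (by linarith))
    ((one_div_le hB₀ hθ).2 hB), ← sub_div, ← Real.log_div (by positivity) (by positivity)]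
  congr 3
  field_simp
  ring

lemma gaussMeasure_preimage_T_Iic (hm : 0 < m) {w : ℝ} (hw : 0 ≤ w) (hwθ : w < th m) :
    gaussMeasure m (T m ⁻¹' Iic w) = gaussMeasure m (Iic w) := by
  have hθ := th_pos hm
  set B : ℕ → ℝ := fun j => (m + j) * th m with hB
  have hBmono : Monotone B := fun i j hij => by simp only [hB]; gcongr
  have hBθ : ∀ j, 1 / th m ≤ B j := fun j => by
    simpa [hB, natCast_mul_th hm] using hBmono (Nat.zero_le j)
  have hBpos : ∀ j, 0 < B j := fun j => (one_div_pos.2 hθ).trans_le (hBθ j)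
  have hBsucc : ∀ j, B (j + 1) = B j + th m := fun j => by simp only [hB]; push_cast; ring
  set h : ℕ → ℝ := fun j => Real.log (1 + w / B j) / th m with hh
  have hpre : T m ⁻¹' Iic w ∩ Ioo 0 (th m) =
      (⋃ j, Icc (1 / (B j + w)) (1 / B j)) ∩ Ioo 0 (th m) := by
    ext x
    simp only [mem_inter_iff, mem_preimage, mem_Iic, mem_iUnion, and_congr_left_iff]
    exact fun hx => T_le_iff hm hx hw hwθ
  have hdisj : Pairwise (Disjoint on fun j => Icc (1 / (B j + w)) (1 / B j)) := by
    refine (pairwise_disjoint_on _).2 fun i j hij => disjoint_left.2 fun x hi hj => ?_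
    have : B i + w < B j := by linarith [hBsucc i, hBmono (Nat.succ_le_of_lt hij)]
    have := one_div_lt_one_div_of_lt (by linarith [hBpos i]) this
    linarith [hi.1, hj.2]
  have hterm : ∀ j, gaussMeasure m (Icc (1 / (B j + w)) (1 / B j)) =
      ENNReal.ofReal (h j - h (j + 1)) := fun j => by
    rw [gaussMeasure_Icc_one_div hm (hBθ j) hw, ← hBsucc]
  have hanti : Antitone h := fun i j hij => by
    have := hBpos i
    have := hBmono hij
    simp only [hh]
    gcongr
  have hlim : Tendsto h atTop (𝓝 0) := by
    have hBtop : Tendsto B atTop atTop :=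
      (tendsto_atTop_add_const_left _ _ tendsto_natCast_atTop_atTop).atTop_mul_const hθ
    simpa using ((Real.continuousAt_log (by norm_num)).tendsto.comp
      ((hBtop.const_div_atTop w).const_add 1)).div_const (th m)
  rw [← gaussMeasure_inter_Ioo, hpre, gaussMeasure_inter_Ioo,
    measure_iUnion hdisj fun _ => measurableSet_Icc, tsum_congr hterm,
    tsum_ofReal_sub_succ hanti hlim, sub_zero, gaussMeasure_Iic hm hw hwθ]
  simp only [hh, hB, Nat.cast_zero, add_zero, natCast_mul_th hm, div_div_eq_mul_div, div_one,
    mul_comm w]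

lemma gaussMeasure_congr_inter {s t : Set ℝ} (h : s ∩ Ioo 0 (th m) = t ∩ Ioo 0 (th m)) :
    gaussMeasure m s = gaussMeasure m t := by
  rw [← gaussMeasure_inter_Ioo s, h, gaussMeasure_inter_Ioo]

theorem measurePreserving_T (hm : 0 < m) :
    MeasurePreserving (T m) (gaussMeasure m) (gaussMeasure m) := by
  refine ⟨measurable_T, Measure.ext_of_Iic _ _ fun w => ?_⟩
  rw [Measure.map_apply measurable_T measurableSet_Iic]
  rcases lt_or_ge w 0 with hw | hw
  · refine gaussMeasure_congr_inter (Subset.antisymm ?_ ?_)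
    · exact fun x ⟨hTx, hx⟩ => absurd ((T_mem_Ico hm hx).1.trans hTx) (not_le.2 hw)
    · exact fun x ⟨hxw, hx⟩ => absurd (hx.1.trans_le hxw) (not_lt.2 hw.le)
  rcases lt_or_ge w (th m) with hwθ | hwθ
  · exact gaussMeasure_preimage_T_Iic hm hw hwθ
  · refine gaussMeasure_congr_inter ?_
    have h₁ : Ioo 0 (th m) ⊆ T m ⁻¹' Iic w := fun x hx => (T_mem_Ico hm hx).2.le.trans hwθ
    have h₂ : Ioo 0 (th m) ⊆ Iic w := fun x hx => hx.2.le.trans hwθ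
    rw [inter_eq_right.2 h₁, inter_eq_right.2 h₂]

lemma setOf_le_digit_subset (hm : 0 < m) (n : ℕ) {c : ℝ} (hc : 0 < c) :
    {x | c ≤ a m n x} ⊆ (T m)^[n - 1] ⁻¹' Iic (1 / (c * th m)) := by
  intro x hx
  set y := (T m)^[n - 1] x
  have hcy : c ≤ 1 / (y * th m) := le_of_le_natFloor hc hx
  have hyθ : 0 < y * th m := one_div_pos.1 (hc.trans_le hcy)
  rw [mem_preimage, mem_Iic, ← div_div, le_div_iff₀ (th_pos hm)]
  exact (le_one_div hc hyθ).1 hcy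

lemma restrict_volume_setOf_le_digit_le (hm : 0 < m) (n : ℕ) {c : ℝ} (hc : 0 < c) :
    volume.restrict (Ioo 0 (th m)) {x | c ≤ a m n x} ≤ ENNReal.ofReal (2 / (c * th m)) :=
  calc volume.restrict (Ioo 0 (th m)) {x | c ≤ a m n x}
      ≤ 2 * gaussMeasure m {x | c ≤ a m n x} := restrict_volume_le_two_smul_gaussMeasure hm _
    _ ≤ 2 * gaussMeasure m ((T m)^[n - 1] ⁻¹' Iic (1 / (c * th m))) := by
        gcongr; exact setOf_le_digit_subset hm n hc
    _ = 2 * gaussMeasure m (Iic (1 / (c * th m))) := by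
        rw [((measurePreserving_T hm).iterate (n - 1)).measure_preimage
          measurableSet_Iic.nullMeasurableSet]
    _ ≤ 2 * ENNReal.ofReal (1 / (c * th m)) := by gcongr; exact gaussMeasure_Iic_le _
    _ = ENNReal.ofReal (2 / (c * th m)) := by
        rw [← ENNReal.ofReal_ofNat 2, ← ENNReal.ofReal_mul zero_le_two, mul_one_div]

end Expansion

/-- For every ε > 0 and a.e. x ∈ (0,θ), a_n(x) < n·(log n)^{1+ε} for all large n. -/
theorem stmt_11 (m : ℕ) (hm : 2 ≤ m) (ε : ℝ) (hε : 0 < ε) :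
    ∀ᵐ x ∂(volume.restrict (Set.Ioo 0 (th m))),
      ∀ᶠ n : ℕ in atTop, (a m n x : ℝ) < (n : ℝ) * Real.log n ^ ((1 : ℝ) + ε) := by
  have hm₀ : 0 < m := by omega
  set c : ℕ → ℝ := fun n => n * Real.log n ^ ((1 : ℝ) + ε)
  have hc : ∀ᶠ n in atTop, 0 < c n := by
    filter_upwards [eventually_ge_atTop 2] with n hn
    have : (1 : ℝ) < n := by exact_mod_cast hn
    have := Real.log_pos this
    positivity
  have hsum : Summable fun n => 2 / th m * (1 / c n) :=
    (summable_one_div_nat_mul_log_rpow (by linarith)).mul_left _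
  have hbad := ae_eventually_notMem_of_summable (s := fun n => {x | c n ≤ a m n x}) hsum <|
    hc.mono fun n hn => (restrict_volume_setOf_le_digit_le hm₀ n hn).trans_eq (by
      rw [div_mul_div_comm, mul_one, mul_comm])
  filter_upwards [hbad] with x hx
  filter_upwards [hx] with n hn using not_le.1 hn
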